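/- arXiv:2507.16703 — 5 statements merged into one kernel-verified Lean document; each statement's English description precedes it below -/
import Mathlib

section
/- Let X be a random variable with bounded density g (g(x) ≤ C for all x) on [0,∞), B an independent standard Brownian motion, and Λ : [0,∞) → [0,∞) a nondecreasing right-continuous function with Λ_0 ≥ 0. Let τ = inf{t ≥ 0 : X + B_t − Λ_t ≤ 0}. Then for each t > 0 the measure ν_t(A) = ∫_0^∞ P(x + B_t − Λ_t ∈ A, τ^x > t) g(x) dx on [0,∞) is absolutely continuous with density Ṽ(t,·) satisfying Ṽ(t,y) ≤ C·Φ((Λ_t + y)/√t) for a.e. y ≥ 0, where Φ is the standard normal CDF. -/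
/-!
Dropping the survival event only enlarges the measure, so `ν_t` is dominated by the law of
`X + B_t - Λ_t`. By independence that law has density `g ⋆ φ`, where `φ` is the Gaussian density
of `B_t - Λ_t`; since `g ≤ C` vanishes on `(-∞, 0)`, `(g ⋆ φ)(y) ≤ C · P(B_t - Λ_t ≤ y)
= C · Φ((Λ_t + y)/√t)`. The Radon–Nikodym derivative of `ν_t` lies a.e. below this density.
-/

open MeasureTheory ProbabilityTheory Filter
open scoped ENNReal NNReal Topology

/-- The standard Gaussian cumulative distribution function. -/
noncomputable def stdGaussianCDF (x : ℝ) : ℝ :=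
  (Real.sqrt (2 * Real.pi))⁻¹ * ∫ t in Set.Iic x, Real.exp (-t ^ 2 / 2)

lemma stdGaussianCDF_nonneg (x : ℝ) : 0 ≤ stdGaussianCDF x :=
  mul_nonneg (inv_nonneg.mpr (Real.sqrt_nonneg _))
    (integral_nonneg fun _ => (Real.exp_pos _).le)

lemma gaussianReal_Iic (m : ℝ) {v : ℝ≥0} (hv : v ≠ 0) (a : ℝ) :
    gaussianReal m v (Set.Iic a) = ENNReal.ofReal (stdGaussianCDF ((a - m) / Real.sqrt v)) := by
  have hsqrt : 0 < Real.sqrt v := Real.sqrt_pos.mpr (by positivity)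
  have hstd : (gaussianReal 0 1).map (fun x => Real.sqrt v * x + m) = gaussianReal m v := by
    rw [show (fun x => Real.sqrt v * x + m) = (· + m) ∘ (Real.sqrt v * ·) from rfl,
      ← Measure.map_map (measurable_add_const m) (measurable_const_mul _),
      gaussianReal_map_const_mul, gaussianReal_map_add_const, mul_zero, zero_add, mul_one]
    congr
    exact Real.sq_sqrt v.coe_nonneg
  have hpre : (fun x => Real.sqrt v * x + m) ⁻¹' Set.Iic a = Set.Iic ((a - m) / Real.sqrt v) := by
    ext x
    simp only [Set.mem_preimage, Set.mem_Iic, le_div_iff₀ hsqrt]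
    constructor <;> intro h <;> linarith
  rw [← hstd, Measure.map_apply (by fun_prop) measurableSet_Iic, hpre,
    gaussianReal_apply_eq_integral 0 one_ne_zero, stdGaussianCDF, ← integral_const_mul]
  congr 2 with x
  simp [gaussianPDFReal]

theorem ProbabilityTheory.IndepFun.map_add_eq_withDensity_lconvolution {Ω G : Type*}
    [MeasurableSpace Ω] {P : Measure Ω} [IsFiniteMeasure P] [AddGroup G] [MeasurableSpace G]
    [MeasurableAdd₂ G] [MeasurableNeg G] {μ : Measure G} [SFinite μ] [μ.IsAddLeftInvariant]
    {X Y : Ω → G} {f p : G → ℝ≥0∞} (hXY : IndepFun X Y P) (hX : Measurable X) (hY : Measurable Y)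
    (hf : Measurable f) (hp : Measurable p)
    (hXf : P.map X = μ.withDensity f) (hYp : P.map Y = μ.withDensity p) :
    P.map (X + Y) = μ.withDensity (f ⋆ₗ[μ] p) := by
  rw [hXY.map_add_eq_map_conv_map hX hY, hXf, hYp, conv_withDensity_eq_lconvolution hf hp]

lemma lconvolution_le_mul_setLIntegral_Iic {f p : ℝ → ℝ≥0∞} {c : ℝ≥0∞}
    (hf : ∀ x, f x ≤ c) (hf_neg : ∀ x < 0, f x = 0) (hp : Measurable p) (y : ℝ) :
    (f ⋆ₗ p) y ≤ c * ∫⁻ x in Set.Iic y, p x := by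
  calc (f ⋆ₗ p) y = ∫⁻ x, f x * p (-x + y) := lconvolution_def
    _ ≤ ∫⁻ x, c * (Set.Iic y).indicator p (y - x) := by
      refine lintegral_mono fun x => ?_
      rcases lt_or_ge x 0 with hx | hx
      · simp [hf_neg x hx]
      · rw [Set.indicator_of_mem (by simpa using hx), neg_add_eq_sub]
        gcongr
        exact hf x
    _ = c * ∫⁻ x in Set.Iic y, p x := by
      rw [lintegral_const_mul _ (show Measurable fun x => (Set.Iic y).indicator p (y - x) from
          (hp.indicator measurableSet_Iic).comp (by fun_prop)),
        lintegral_sub_left_eq_self, lintegral_indicator measurableSet_Iic]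

lemma absolutelyContinuous_of_le_withDensity {α : Type*} [MeasurableSpace α] {μ ν : Measure α}
    {h : α → ℝ≥0∞} (hνh : ν ≤ μ.withDensity h) : ν ≪ μ :=
  (Measure.absolutelyContinuous_of_le hνh).trans (withDensity_absolutelyContinuous _ _)

lemma Measure.rnDeriv_le_of_le_withDensity {α : Type*} [MeasurableSpace α] {μ ν : Measure α}
    [SigmaFinite μ] [ν.HaveLebesgueDecomposition μ] {h : α → ℝ≥0∞}
    (hνh : ν ≤ μ.withDensity h) : ν.rnDeriv μ ≤ᵐ[μ] h := by
  have hνμ : ν ≪ μ := absolutelyContinuous_of_le_withDensity hνh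
  refine ae_le_of_forall_setLIntegral_le_of_sigmaFinite (Measure.measurable_rnDeriv ν μ)
    fun s hs _ => ?_
  calc ∫⁻ x in s, ν.rnDeriv μ x ∂μ = ν s := Measure.setLIntegral_rnDeriv hνμ s
    _ ≤ μ.withDensity h s := hνh s
    _ = ∫⁻ x in s, h x ∂μ := withDensity_apply _ hs

lemma exists_density_le_of_le_withDensity {α : Type*} [MeasurableSpace α] {μ ν : Measure α}
    [SigmaFinite μ] [IsFiniteMeasure ν] {h : α → ℝ≥0∞} (hνh : ν ≤ μ.withDensity h) :
    ∃ V : α → ℝ, Measurable V ∧ (∀ x, 0 ≤ V x) ∧ (∀ s, ν.real s = ∫ x in s, V x ∂μ) ∧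
      ∀ᵐ x ∂μ, ENNReal.ofReal (V x) ≤ h x := by
  have hνμ : ν ≪ μ := absolutelyContinuous_of_le_withDensity hνh
  refine ⟨fun x => (ν.rnDeriv μ x).toReal, (Measure.measurable_rnDeriv ν μ).ennreal_toReal,
    fun _ => ENNReal.toReal_nonneg, fun s => (Measure.setIntegral_toReal_rnDeriv hνμ s).symm, ?_⟩
  filter_upwards [Measure.rnDeriv_le_of_le_withDensity hνh] with x hx
  exact ENNReal.ofReal_toReal_le.trans hx

theorem surviving_density_bound_general {Ω : Type*} [MeasurableSpace Ω]
    (P : Measure Ω) [IsProbabilityMeasure P]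
    (g : ℝ → ℝ) (hgm : Measurable g) (hg0 : ∀ x, 0 ≤ g x)
    (C : ℝ) (hgC : ∀ x, g x ≤ C) (hgsupp : ∀ x < 0, g x = 0)
    (X B : Ω → ℝ) (hXm : Measurable X) (hBm : Measurable B)
    (t : ℝ) (ht : 0 < t) (Λt : ℝ)
    (hX : Measure.map X P = volume.withDensity fun x => ENNReal.ofReal (g x))
    (hB : Measure.map B P = gaussianReal 0 (Real.toNNReal t))
    (hindep : IndepFun X B P)
    (E : Set Ω) :
    ∃ V : ℝ → ℝ, Measurable V ∧ (∀ y, 0 ≤ V y) ∧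
      (∀ A : Set ℝ, MeasurableSet A → A ⊆ Set.Ici 0 →
        ((Measure.map (fun ω => X ω + B ω - Λt) (P.restrict E)) A).toReal = ∫ y in A, V y) ∧
      (∀ᵐ y ∂(volume.restrict (Set.Ici (0:ℝ))),
        V y ≤ C * stdGaussianCDF ((Λt + y) / Real.sqrt t)) := by
  have hv : Real.toNNReal t ≠ 0 := by simpa using ht
  have hC : 0 ≤ C := (hg0 0).trans (hgC 0)
  set pdf := gaussianPDF (-Λt) (Real.toNNReal t)
  have hBshift : P.map (fun ω => B ω - Λt) = volume.withDensity pdf := by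
    rw [show (fun ω => B ω - Λt) = (· - Λt) ∘ B from rfl,
      ← Measure.map_map (measurable_sub_const Λt) hBm, hB, gaussianReal_map_sub_const, zero_sub,
      gaussianReal_of_var_ne_zero _ hv]
  have hlaw : P.map (fun ω => X ω + B ω - Λt)
      = volume.withDensity ((fun x => ENNReal.ofReal (g x)) ⋆ₗ pdf) := by
    simp_rw [add_sub_assoc]
    exact (hindep.comp measurable_id (measurable_sub_const Λt)).map_add_eq_withDensity_lconvolution
      hXm (hBm.sub_const Λt) hgm.ennreal_ofReal (measurable_gaussianPDF _ _) hX hBshift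
  obtain ⟨V, hVm, hV0, hVA, hVle⟩ := exists_density_le_of_le_withDensity
    (ν := (P.restrict E).map fun ω => X ω + B ω - Λt)
    ((Measure.map_mono Measure.restrict_le_self ((hXm.add hBm).sub_const Λt)).trans hlaw.le)
  refine ⟨V, hVm, hV0, fun A _ _ => hVA A, ae_restrict_of_ae ?_⟩
  filter_upwards [hVle] with y hVy
  rw [← ENNReal.ofReal_le_ofReal_iff (mul_nonneg hC (stdGaussianCDF_nonneg _))]
  calc ENNReal.ofReal (V y) ≤ ((fun x => ENNReal.ofReal (g x)) ⋆ₗ pdf) y := hVy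
    _ ≤ ENNReal.ofReal C * ∫⁻ x in Set.Iic y, pdf x :=
      lconvolution_le_mul_setLIntegral_Iic (fun x => ENNReal.ofReal_le_ofReal (hgC x))
        (fun x hx => by simp [hgsupp x hx]) (measurable_gaussianPDF _ _) y
    _ = ENNReal.ofReal (C * stdGaussianCDF ((Λt + y) / Real.sqrt t)) := by
      rw [← gaussianReal_apply _ hv, gaussianReal_Iic _ hv, ENNReal.ofReal_mul hC,
        Real.coe_toNNReal _ ht.le, sub_neg_eq_add, add_comm]

/-- Density bound for the surviving mass: if X has bounded density g <= C supported on [0,inf),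
B is an independent Gaussian of variance t, Lambda_t >= 0, and E is any (survival) event, then
the measure A -> P(X + B - Lambda_t in A, E) on [0,inf) has a density V with
V(y) <= C * Phi((Lambda_t + y)/sqrt(t)) a.e. on [0,inf). -/
theorem surviving_density_bound {Ω : Type*} [MeasurableSpace Ω]
    (P : Measure Ω) [IsProbabilityMeasure P]
    (g : ℝ → ℝ) (hgm : Measurable g) (hg0 : ∀ x, 0 ≤ g x)
    (C : ℝ) (hgC : ∀ x, g x ≤ C) (hgsupp : ∀ x < 0, g x = 0)
    (X B : Ω → ℝ) (hXm : Measurable X) (hBm : Measurable B)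
    (t : ℝ) (ht : 0 < t) (Λt : ℝ) (hΛt : 0 ≤ Λt)
    (hX : Measure.map X P = volume.withDensity fun x => ENNReal.ofReal (g x))
    (hB : Measure.map B P = gaussianReal 0 (Real.toNNReal t))
    (hindep : IndepFun X B P)
    (E : Set Ω) (hE : MeasurableSet E) :
    ∃ V : ℝ → ℝ, Measurable V ∧ (∀ y, 0 ≤ V y) ∧
      (∀ A : Set ℝ, MeasurableSet A → A ⊆ Set.Ici 0 →
        ((Measure.map (fun ω => X ω + B ω - Λt) (P.restrict E)) A).toReal = ∫ y in A, V y) ∧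
      (∀ᵐ y ∂(volume.restrict (Set.Ici (0:ℝ))),
        V y ≤ C * stdGaussianCDF ((Λt + y) / Real.sqrt t)) :=
  surviving_density_bound_general P g hgm hg0 C hgC hgsupp X B hXm hBm t ht Λt hX hB hindep E
end

section
/- If g : [0,∞) → [0,∞) is measurable, bounded, and there exists x₀ > 0 with ∫_0^{x₀} g(y) dy > 2x₀, then no globally continuous solution of the McKean–Vlasov free-boundary equation Λ_t = ∫_0^∞ P(inf_{s≤t}(x + B_s − Λ_s) ≤ 0) g(x) dx exists. -/
/-!
Let `G = ∫_0^{x₀} g > 2 x₀`. A particle started at `x ∈ (0, x₀]` is absorbed by time `t` as soon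
as `B_t ≤ Λ_t - x₀`, so the equation gives `Λ_t ≥ P(B_t ≤ Λ_t - x₀) G`. Since `Λ ≥ 0`, for large
`t` this probability is close to `1/2 > x₀ / G`, so `Λ` exceeds `x₀`. By continuity `Λ_τ = x₀` at
some time `τ`, and there the bound reads `x₀ ≥ P(B_τ ≤ 0) G ≥ G / 2 > x₀`.

The right-hand side of the equation is integrable in `x` by a reflection inequality for the
Brownian motion on dyadic grids (Lévy's maximal inequality) and a Chernoff bound for its tail.
-/

open MeasureTheory ProbabilityTheory Filter
open scoped ENNReal NNReal Topology

/-- The error function `erf`. -/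
noncomputable def errorFun (x : ℝ) : ℝ :=
  2 / Real.sqrt Real.pi * ∫ u in (0:ℝ)..x, Real.exp (-u ^ 2)

/-- `W` is the law of a standard Brownian motion on `ℝ → ℝ` (restricted to times `≥ 0`):
a probability measure with a.e. continuous paths started at `0`, independent increments, and
Gaussian increments of the right variance. -/
def IsStdBrownian (W : Measure (ℝ → ℝ)) : Prop :=
  IsProbabilityMeasure W ∧
  (∀ᵐ b ∂W, Continuous b ∧ b 0 = 0) ∧
  (∀ n : ℕ, ∀ t : Fin (n + 1) → ℝ, Monotone t → (∀ i, 0 ≤ t i) →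
    iIndepFun
      (fun i : Fin n => fun b : ℝ → ℝ => b (t i.succ) - b (t i.castSucc)) W) ∧
  (∀ s t : ℝ, 0 ≤ s → s ≤ t →
    Measure.map (fun b : ℝ → ℝ => b t - b s) W = gaussianReal 0 (Real.toNNReal (t - s)))

open Set Real

namespace ProbabilityTheory

lemma inv_two_le_gaussianReal_Iic_zero (v : ℝ≥0) :
    (2 : ℝ≥0∞)⁻¹ ≤ gaussianReal 0 v (Iic 0) := by
  have hsymm : gaussianReal 0 v (Ici 0) = gaussianReal 0 v (Iic 0) := by
    conv_rhs => rw [← neg_zero, ← gaussianReal_map_neg,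
      Measure.map_apply measurable_neg measurableSet_Iic]
    simp
  have hcover : (1 : ℝ≥0∞) ≤ gaussianReal 0 v (Iic 0) + gaussianReal 0 v (Ici 0) := by
    simpa [Iic_union_Ici] using measure_union_le (μ := gaussianReal 0 v) (Iic 0) (Ici 0)
  rw [hsymm, ← two_mul] at hcover
  rwa [ENNReal.inv_le_iff_le_mul (by simp) (by simp)]

lemma one_half_le_gaussianReal_real_Iic_zero (v : ℝ≥0) :
    1 / 2 ≤ (gaussianReal 0 v).real (Iic 0) := by
  simpa [measureReal_def] using
    ENNReal.toReal_mono (measure_ne_top _ _) (inv_two_le_gaussianReal_Iic_zero v)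

lemma gaussianReal_real_Iic_le_exp (v : ℝ≥0) (y : ℝ) :
    (gaussianReal 0 v).real (Iic y) ≤ exp (y + v / 2) := by
  have := measure_le_le_exp_mul_mgf (X := id) (μ := gaussianReal 0 v) y (t := -1) (by norm_num)
    (integrable_exp_mul_gaussianReal (-1))
  rw [mgf_id_gaussianReal, ← exp_add] at this
  convert this using 2 <;> simp [Iic_def]

lemma gaussianPDFReal_le_inv_sqrt (μ : ℝ) (v : ℝ≥0) (x : ℝ) :
    gaussianPDFReal μ v x ≤ (√(2 * π * v))⁻¹ := by
  rw [gaussianPDFReal]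
  refine mul_le_of_le_one_right (by positivity) (exp_le_one_iff.2 ?_)
  exact div_nonpos_of_nonpos_of_nonneg (by nlinarith) (by positivity)

lemma gaussianReal_real_Ioc_le {v : ℝ≥0} (hv : v ≠ 0) (μ : ℝ) {a b : ℝ} (hab : a ≤ b) :
    (gaussianReal μ v).real (Ioc a b) ≤ (b - a) / √(2 * π * v) := by
  rw [measureReal_def, gaussianReal_apply_eq_integral μ hv,
    ENNReal.toReal_ofReal
      (setIntegral_nonneg measurableSet_Ioc fun x _ ↦ gaussianPDFReal_nonneg _ _ _)]
  have := norm_setIntegral_le_of_norm_le_const (f := gaussianPDFReal μ v)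
    (measure_Ioc_lt_top (a := a) (b := b) (μ := volume))
    fun x _ ↦ by
      rw [Real.norm_of_nonneg (gaussianPDFReal_nonneg _ _ _)]
      exact gaussianPDFReal_le_inv_sqrt μ v x
  rw [Real.volume_real_Ioc_of_le hab] at this
  simpa [div_eq_inv_mul] using (le_abs_self _).trans this

lemma one_half_sub_div_le_gaussianReal_real_Iic_neg {v : ℝ≥0} (hv : v ≠ 0) {a : ℝ}
    (ha : 0 ≤ a) :
    1 / 2 - a / √(2 * π * v) ≤ (gaussianReal 0 v).real (Iic (-a)) := by
  have hsplit : (gaussianReal 0 v).real (Iic 0)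
      = (gaussianReal 0 v).real (Iic (-a)) + (gaussianReal 0 v).real (Ioc (-a) 0) := by
    rw [← measureReal_union (Iic_disjoint_Ioc le_rfl) measurableSet_Ioc,
      Iic_union_Ioc_eq_Iic (neg_nonpos.2 ha)]
  have := gaussianReal_real_Ioc_le hv 0 (neg_nonpos.2 ha)
  have := one_half_le_gaussianReal_real_Iic_zero v
  rw [zero_sub, neg_neg] at *
  linarith

lemma eventually_lt_gaussianReal_real_Iic_neg {a r : ℝ} (ha : 0 ≤ a) (hr : r < 1 / 2) :
    ∀ᶠ t : ℝ in atTop, r < (gaussianReal 0 t.toNNReal).real (Iic (-a)) := by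
  have hlim : Tendsto (fun t : ℝ ↦ 1 / 2 - a / √(2 * π * t)) atTop (𝓝 (1 / 2 - 0)) :=
    tendsto_const_nhds.sub <| tendsto_const_nhds.div_atTop <|
      tendsto_sqrt_atTop.comp (tendsto_id.const_mul_atTop (by positivity))
  filter_upwards [(sub_zero (1 / 2 : ℝ) ▸ hlim).eventually (lt_mem_nhds hr),
    eventually_gt_atTop 0] with t hrt ht
  refine hrt.trans_le ?_
  have := one_half_sub_div_le_gaussianReal_real_Iic_neg (v := t.toNNReal) (by simpa using ht) ha
  rwa [Real.coe_toNNReal _ ht.le] at this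

end ProbabilityTheory

section MaximalInequality

variable {Ω : Type*}

def firstPassage (S : ℕ → Ω → ℝ) (c : ℝ) (k : ℕ) : Set Ω :=
  {ω | S k ω < c ∧ ∀ j < k, c ≤ S j ω}

lemma setOf_exists_lt_subset_biUnion_firstPassage (S : ℕ → Ω → ℝ) (c : ℝ) (n : ℕ) :
    {ω | ∃ k ≤ n, S k ω < c} ⊆ ⋃ k ∈ Finset.range (n + 1), firstPassage S c k := by
  classical
  intro ω hω
  have hfind := Nat.find_spec hω
  refine mem_iUnion₂.2
    ⟨Nat.find hω, Finset.mem_range_succ_iff.2 hfind.1, hfind.2, fun j hj ↦ ?_⟩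
  exact not_lt.1 fun hlt ↦ Nat.find_min hω hj ⟨hj.le.trans hfind.1, hlt⟩

lemma pairwise_disjoint_firstPassage (S : ℕ → Ω → ℝ) (c : ℝ) :
    Pairwise fun k l ↦ Disjoint (firstPassage S c k) (firstPassage S c l) := by
  intro k l hkl
  rcases hkl.lt_or_gt with h | h
  · exact disjoint_left.2 fun _ hk hl ↦ (hl.2 k h).not_gt hk.1
  · exact disjoint_left.2 fun _ hk hl ↦ (hk.2 l h).not_gt hl.1

lemma measurableSet_firstPassage {m : MeasurableSpace Ω} {S : ℕ → Ω → ℝ} {k : ℕ}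
    (hS : ∀ j ≤ k, Measurable (S j)) (c : ℝ) : MeasurableSet (firstPassage S c k) := by
  have : firstPassage S c k = {ω | S k ω < c} ∩ ⋂ j ∈ Finset.range k, {ω | c ≤ S j ω} := by
    ext; simp [firstPassage]
  rw [this]
  exact (measurableSet_lt (hS k le_rfl) measurable_const).inter <|
    Finset.measurableSet_biInter _ fun j hj ↦
      measurableSet_le measurable_const (hS j (Finset.mem_range.1 hj).le)

lemma measurable_sum_iSup_comap {X : ℕ → Ω → ℝ} {U : Set ℕ} {I : Finset ℕ} (hI : ↑I ⊆ U) :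
    Measurable[⨆ i ∈ U, MeasurableSpace.comap (X i) inferInstance] fun ω ↦ ∑ i ∈ I, X i ω :=
  Finset.measurable_sum I fun i hi ↦ Measurable.of_comap_le <|
    le_iSup₂ (f := fun i (_ : i ∈ U) ↦ MeasurableSpace.comap (X i) inferInstance) i (hI hi)

variable [MeasurableSpace Ω] {μ : Measure Ω}

lemma ProbabilityTheory.iIndepFun.measure_inter_eq_mul_of_disjoint {X : ℕ → Ω → ℝ} {n : ℕ}
    (hX : ∀ i, Measurable (X i)) (hind : iIndepFun (fun i : Fin n ↦ X i) μ)
    {S T : Set ℕ} (hST : Disjoint S T) (hS : S ⊆ Iio n) (hT : T ⊆ Iio n) {A B : Set Ω}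
    (hA : MeasurableSet[⨆ i ∈ S, MeasurableSpace.comap (X i) inferInstance] A)
    (hB : MeasurableSet[⨆ i ∈ T, MeasurableSpace.comap (X i) inferInstance] B) :
    μ (A ∩ B) = μ A * μ B := by
  have hle : ∀ U ⊆ Iio n, ⨆ i ∈ U, MeasurableSpace.comap (X i) inferInstance
      ≤ ⨆ i ∈ {i : Fin n | (i : ℕ) ∈ U}, MeasurableSpace.comap (X i) inferInstance :=
    fun U hU ↦ iSup₂_le fun i hi ↦
      le_iSup₂_of_le (f := fun (i : Fin n) (_ : (i : ℕ) ∈ U) ↦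
        MeasurableSpace.comap (X i) inferInstance) ⟨i, hU hi⟩ hi le_rfl
  have hFin : Indep (⨆ i ∈ {i : Fin n | (i : ℕ) ∈ S}, MeasurableSpace.comap (X i) inferInstance)
      (⨆ i ∈ {i : Fin n | (i : ℕ) ∈ T}, MeasurableSpace.comap (X i) inferInstance) μ :=
    indep_iSup_of_disjoint (fun i : Fin n ↦ (hX i).comap_le)
      ((iIndepFun_iff_iIndep _ (fun i : Fin n ↦ X i) μ).1 hind)
      (disjoint_left.2 fun _ hS hT ↦ disjoint_left.1 hST hS hT)
  exact (Indep_iff _ _ μ).1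
    (indep_of_indep_of_le_right (indep_of_indep_of_le_left hFin (hle S hS)) (hle T hT)) A B hA hB

theorem measure_exists_sum_lt_le_two_mul {X : ℕ → Ω → ℝ} {n : ℕ}
    (hX : ∀ i, Measurable (X i)) (hind : iIndepFun (fun i : Fin n ↦ X i) μ)
    (hmed : ∀ k ≤ n, (2 : ℝ≥0∞)⁻¹ ≤ μ {ω | ∑ i ∈ Finset.Ico k n, X i ω ≤ 0}) (c : ℝ) :
    μ {ω | ∃ k ≤ n, ∑ i ∈ Finset.range k, X i ω < c}
      ≤ 2 * μ {ω | ∑ i ∈ Finset.range n, X i ω < c} := by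
  set S : ℕ → Ω → ℝ := fun k ω ↦ ∑ i ∈ Finset.range k, X i ω
  set B : ℕ → Set Ω := fun k ↦ {ω | ∑ i ∈ Finset.Ico k n, X i ω ≤ 0}
  have hmeas : ∀ k, MeasurableSet (firstPassage S c k ∩ B k) := fun k ↦
    (measurableSet_firstPassage (fun j _ ↦ Finset.measurable_sum _ fun i _ ↦ hX i) c).inter
      (measurableSet_le (Finset.measurable_sum _ fun i _ ↦ hX i) measurable_const)
  have hindep : ∀ k ≤ n, μ (firstPassage S c k ∩ B k) = μ (firstPassage S c k) * μ (B k) :=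
    fun k hk ↦ hind.measure_inter_eq_mul_of_disjoint hX (S := Iio k) (T := Ico k n)
      (disjoint_left.2 fun _ hi hi' ↦ not_le.2 hi hi'.1) (Iio_subset_Iio hk) Ico_subset_Iio_self
      (measurableSet_firstPassage (fun j hj ↦ measurable_sum_iSup_comap fun i hi ↦
        mem_Iio.2 ((Finset.mem_range.1 hi).trans_le hj)) c)
      (measurableSet_le (measurable_sum_iSup_comap fun i hi ↦ by simpa using hi) measurable_const)
  have hhit : ∀ k ≤ n, firstPassage S c k ∩ B k ⊆ {ω | S n ω < c} := by
    rintro k hk ω ⟨⟨hSk, -⟩, hBk⟩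
    simp only [S, mem_ofPred_eq, ← Finset.sum_range_add_sum_Ico _ hk]
    exact add_lt_of_lt_of_nonpos hSk hBk
  calc μ {ω | ∃ k ≤ n, S k ω < c}
      ≤ μ (⋃ k ∈ Finset.range (n + 1), firstPassage S c k) :=
        measure_mono (setOf_exists_lt_subset_biUnion_firstPassage S c n)
    _ ≤ ∑ k ∈ Finset.range (n + 1), μ (firstPassage S c k) := measure_biUnion_finset_le _ _
    _ ≤ ∑ k ∈ Finset.range (n + 1), 2 * μ (firstPassage S c k ∩ B k) := by
        refine Finset.sum_le_sum fun k hk ↦ ?_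
        have hk := Finset.mem_range_succ_iff.1 hk
        -- after the first passage below `c`, the independent remaining increments keep the sum
        -- below `c` with probability at least `1/2`
        calc μ (firstPassage S c k) = μ (firstPassage S c k) * (2 * 2⁻¹) := by
              rw [ENNReal.mul_inv_cancel two_ne_zero ENNReal.ofNat_ne_top, mul_one]
          _ ≤ μ (firstPassage S c k) * (2 * μ (B k)) := by gcongr; exact hmed k hk
          _ = 2 * μ (firstPassage S c k ∩ B k) := by rw [hindep k hk]; ring
    _ = 2 * μ (⋃ k ∈ Finset.range (n + 1), firstPassage S c k ∩ B k) := by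
        rw [measure_biUnion_finset (fun k _ l _ hkl ↦
          ((pairwise_disjoint_firstPassage S c hkl).mono inter_subset_left inter_subset_left))
          fun k _ ↦ hmeas k, Finset.mul_sum]
    _ ≤ 2 * μ {ω | S n ω < c} := by
        gcongr
        exact iUnion₂_subset fun k hk ↦ hhit k (Finset.mem_range_succ_iff.1 hk)

end MaximalInequality

lemma Continuous.exists_dyadic_lt {f : ℝ → ℝ} (hf : Continuous f) {t s c : ℝ}
    (hs : s ∈ Icc 0 t) (hfs : f s < c) : ∃ m k : ℕ, k ≤ 2 ^ m ∧ f (t * k / 2 ^ m) < c := by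
  rcases (hs.1.trans hs.2).eq_or_lt with rfl | ht
  · exact ⟨0, 0, Nat.zero_le _, by simpa [le_antisymm hs.2 hs.1] using hfs⟩
  obtain ⟨δ, hδ, hball⟩ := Metric.isOpen_iff.1 (isOpen_lt hf continuous_const) s hfs
  obtain ⟨m, hm⟩ := exists_pow_lt_of_lt_one (div_pos hδ ht) (one_half_lt_one (α := ℝ))
  have h2m : (0 : ℝ) < 2 ^ m := by positivity
  have hmesh : t / 2 ^ m < δ := by
    rwa [one_div, inv_pow, lt_div_iff₀ ht, ← div_eq_inv_mul] at hm
  -- the grid point just left of `s`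
  set k := ⌊s * 2 ^ m / t⌋₊
  have hk : (k : ℝ) * t ≤ s * 2 ^ m :=
    (le_div_iff₀ ht).1 (Nat.floor_le (by have := hs.1; positivity))
  have hk' : s * 2 ^ m < (k + 1) * t := (div_lt_iff₀ ht).1 (Nat.lt_floor_add_one _)
  have hle : t * k / 2 ^ m ≤ s := (div_le_iff₀ h2m).2 (by linarith)
  have hgt : s < t * k / 2 ^ m + t / 2 ^ m := by
    rw [← add_div, lt_div_iff₀ h2m]
    linarith
  refine ⟨m, k, ?_, hball ?_⟩
  · have : (k : ℝ) ≤ 2 ^ m := le_of_mul_le_mul_right (by nlinarith [hs.2]) ht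
    exact_mod_cast this
  · rw [Metric.mem_ball, Real.dist_eq, abs_lt]
    constructor <;> linarith

namespace IsStdBrownian

variable {W : Measure (ℝ → ℝ)}

lemma isProbabilityMeasure (hW : IsStdBrownian W) : IsProbabilityMeasure W := hW.1

lemma measure_sub_preimage (hW : IsStdBrownian W) {s t : ℝ} (hs : 0 ≤ s) (hst : s ≤ t)
    {A : Set ℝ} (hA : MeasurableSet A) :
    W ((fun b : ℝ → ℝ ↦ b t - b s) ⁻¹' A) = gaussianReal 0 (t - s).toNNReal A := by
  rw [← hW.2.2.2 s t hs hst, Measure.map_apply (by fun_prop) hA]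

lemma measure_eval_preimage (hW : IsStdBrownian W) {t : ℝ} (ht : 0 ≤ t)
    {A : Set ℝ} (hA : MeasurableSet A) :
    W ((fun b : ℝ → ℝ ↦ b t) ⁻¹' A) = gaussianReal 0 t.toNNReal A := by
  have h := hW.measure_sub_preimage le_rfl ht hA
  rw [sub_zero] at h
  rw [← h]
  refine measure_congr (eventuallyEq_set.2 ?_)
  filter_upwards [hW.2.1] with b hb
  simp [hb.2]

lemma measure_exists_lt_le_of_monotone (hW : IsStdBrownian W) {σ : ℕ → ℝ} (hσ : Monotone σ)
    (hσ0 : σ 0 = 0) (n : ℕ) (c : ℝ) :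
    W {b | ∃ k ≤ n, b (σ k) < c} ≤ 2 * gaussianReal 0 (σ n).toNNReal (Iio c) := by
  have hσnn : ∀ k, 0 ≤ σ k := fun k ↦ hσ0 ▸ hσ (Nat.zero_le k)
  set X : ℕ → (ℝ → ℝ) → ℝ := fun i b ↦ b (σ (i + 1)) - b (σ i)
  have hind : iIndepFun (fun i : Fin n ↦ X i) W := by
    simpa using hW.2.2.1 n (fun j ↦ σ j) (fun _ _ hij ↦ hσ hij) fun j ↦ hσnn j
  have hpath : ∀ᵐ b ∂W, ∀ k, b (σ k) = ∑ i ∈ Finset.range k, X i b := by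
    filter_upwards [hW.2.1] with b hb k
    rw [Finset.sum_range_sub (fun i ↦ b (σ i)), hσ0, hb.2, sub_zero]
  have hmed : ∀ k ≤ n, (2 : ℝ≥0∞)⁻¹ ≤ W {b | ∑ i ∈ Finset.Ico k n, X i b ≤ 0} := by
    intro k hk
    have hIco : ∀ b, ∑ i ∈ Finset.Ico k n, X i b = b (σ n) - b (σ k) := fun b ↦ by
      rw [Finset.sum_Ico_eq_sub _ hk, Finset.sum_range_sub (fun i ↦ b (σ i)),
        Finset.sum_range_sub (fun i ↦ b (σ i))]
      ring
    simp_rw [hIco]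
    change _ ≤ W ((fun b : ℝ → ℝ ↦ b (σ n) - b (σ k)) ⁻¹' Iic 0)
    rw [hW.measure_sub_preimage (hσnn k) (hσ hk) measurableSet_Iic]
    exact inv_two_le_gaussianReal_Iic_zero _
  calc W {b | ∃ k ≤ n, b (σ k) < c}
      = W {b | ∃ k ≤ n, ∑ i ∈ Finset.range k, X i b < c} :=
        measure_congr <| eventuallyEq_set.2 <| by
          filter_upwards [hpath] with b hb
          simp only [hb]
    _ ≤ 2 * W {b | ∑ i ∈ Finset.range n, X i b < c} :=
        measure_exists_sum_lt_le_two_mul (fun i ↦ by fun_prop) hind hmed c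
    _ = 2 * gaussianReal 0 (σ n).toNNReal (Iio c) := by
        rw [← hW.measure_eval_preimage (hσnn n) measurableSet_Iio]
        congr 1
        exact measure_congr <| eventuallyEq_set.2 <| by
          filter_upwards [hpath] with b hb
          simp [hb n]

lemma measure_exists_lt_le (hW : IsStdBrownian W) {t : ℝ} (ht : 0 ≤ t) (c : ℝ) :
    W {b | ∃ s ∈ Icc 0 t, b s < c} ≤ 2 * gaussianReal 0 t.toNNReal (Iio c) := by
  set E : ℕ → Set (ℝ → ℝ) := fun m ↦ {b | ∃ k : ℕ, k ≤ 2 ^ m ∧ b (t * k / 2 ^ m) < c}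
  have hE : Monotone E := monotone_nat_of_le_succ fun m b ⟨k, hk, hb⟩ ↦
    ⟨2 * k, by rw [pow_succ]; omega, by convert hb using 2; push_cast; field_simp; ring⟩
  have hcover : {b : ℝ → ℝ | ∃ s ∈ Icc 0 t, b s < c} ≤ᵐ[W] ⋃ m, E m := by
    filter_upwards [hW.2.1] with b hb ⟨s, hs, hbs⟩
    exact mem_iUnion.2 (hb.1.exists_dyadic_lt hs hbs)
  calc W {b | ∃ s ∈ Icc 0 t, b s < c} ≤ W (⋃ m, E m) := measure_mono_ae hcover
    _ = ⨆ m, W (E m) := hE.measure_iUnion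
    _ ≤ 2 * gaussianReal 0 t.toNNReal (Iio c) := iSup_le fun m ↦ by
        have h := hW.measure_exists_lt_le_of_monotone (σ := fun k : ℕ ↦ t * k / 2 ^ m)
          (fun i j hij ↦ by dsimp only; gcongr) (by simp) (2 ^ m) c
        rw [Nat.cast_pow, Nat.cast_ofNat, mul_div_cancel_right₀ _ (by positivity)] at h
        exact h

end IsStdBrownian

def hittingProb (W : Measure (ℝ → ℝ)) (Λ : ℝ → ℝ) (t x : ℝ) : ℝ :=
  (W {b | ∃ s ∈ Icc 0 t, x + b s ≤ Λ s}).toReal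

lemma hittingProb_nonneg (W : Measure (ℝ → ℝ)) (Λ : ℝ → ℝ) (t x : ℝ) :
    0 ≤ hittingProb W Λ t x :=
  ENNReal.toReal_nonneg

lemma hittingProb_antitone (W : Measure (ℝ → ℝ)) [IsFiniteMeasure W] (Λ : ℝ → ℝ) (t : ℝ) :
    Antitone (hittingProb W Λ t) := fun _ _ hxy ↦
  ENNReal.toReal_mono (measure_ne_top _ _) <|
    measure_mono fun _ ⟨s, hs, hb⟩ ↦ ⟨s, hs, by linarith⟩

namespace IsStdBrownian

variable {W : Measure (ℝ → ℝ)} {Λ : ℝ → ℝ} {t : ℝ}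

lemma gaussianReal_real_Iic_le_hittingProb (hW : IsStdBrownian W) (ht : 0 ≤ t) (x : ℝ) :
    (gaussianReal 0 t.toNNReal).real (Iic (Λ t - x)) ≤ hittingProb W Λ t x := by
  have := hW.isProbabilityMeasure
  rw [measureReal_def, ← hW.measure_eval_preimage ht measurableSet_Iic]
  refine ENNReal.toReal_mono (measure_ne_top _ _) (measure_mono fun b hb ↦ ?_)
  exact ⟨t, ⟨ht, le_rfl⟩, by simp only [mem_preimage, mem_Iic] at hb; linarith⟩

lemma hittingProb_le (hW : IsStdBrownian W) (hΛ : MonotoneOn Λ (Ici 0)) (ht : 0 ≤ t) (x : ℝ) :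
    hittingProb W Λ t x ≤ 2 * (gaussianReal 0 t.toNNReal).real (Iio (Λ t - x + 1)) := by
  have hsub : {b : ℝ → ℝ | ∃ s ∈ Icc 0 t, x + b s ≤ Λ s}
      ⊆ {b | ∃ s ∈ Icc 0 t, b s < Λ t - x + 1} := fun b ⟨s, hs, hb⟩ ↦
    ⟨s, hs, by linarith [hΛ hs.1 ht hs.2]⟩
  have h := (measure_mono hsub).trans (hW.measure_exists_lt_le ht (Λ t - x + 1))
  simpa [hittingProb, measureReal_def] using
    ENNReal.toReal_mono (ENNReal.mul_ne_top (by simp) (measure_ne_top _ _)) h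

-- Without integrability the Bochner integral in the equation would be `0`.
lemma integrableOn_hittingProb_mul (hW : IsStdBrownian W) (hΛ : MonotoneOn Λ (Ici 0))
    (ht : 0 ≤ t) {g : ℝ → ℝ} (hgm : Measurable g) (hg0 : ∀ x, 0 ≤ g x) {C : ℝ}
    (hgC : ∀ x, g x ≤ C) :
    IntegrableOn (fun x ↦ hittingProb W Λ t x * g x) (Ioi 0) := by
  have := hW.isProbabilityMeasure
  refine Integrable.mono'
    ((exp_neg_integrableOn_Ioi 0 one_pos).const_mul (2 * C * exp (Λ t + 1 + t / 2)))
    ((hittingProb_antitone W Λ t).measurable.mul hgm).aestronglyMeasurable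
    (ae_of_all _ fun x ↦ ?_)
  have hchernoff := gaussianReal_real_Iic_le_exp t.toNNReal (Λ t - x + 1)
  rw [Real.coe_toNNReal _ ht] at hchernoff
  have htail := (measureReal_mono (μ := gaussianReal 0 t.toNNReal) Iio_subset_Iic_self).trans
    hchernoff
  calc ‖hittingProb W Λ t x * g x‖ = hittingProb W Λ t x * g x :=
        Real.norm_of_nonneg (mul_nonneg (hittingProb_nonneg W Λ t x) (hg0 x))
    _ ≤ 2 * exp (Λ t - x + 1 + t / 2) * C :=
        mul_le_mul ((hW.hittingProb_le hΛ ht x).trans (by linarith)) (hgC x) (hg0 x)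
          (by positivity)
    _ = 2 * C * exp (Λ t + 1 + t / 2) * exp (-1 * x) := by
        rw [mul_assoc (2 * C), ← exp_add]
        ring_nf

lemma gaussianReal_real_Iic_mul_integral_le (hW : IsStdBrownian W) (ht : 0 ≤ t) {g : ℝ → ℝ}
    (hg0 : ∀ x, 0 ≤ g x) (hint : IntegrableOn (fun x ↦ hittingProb W Λ t x * g x) (Ioi 0))
    (heq : Λ t = ∫ x in Ioi 0, hittingProb W Λ t x * g x) (x₀ : ℝ) :
    (gaussianReal 0 t.toNNReal).real (Iic (Λ t - x₀)) * ∫ y in Ioc 0 x₀, g y ≤ Λ t := by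
  set q := (gaussianReal 0 t.toNNReal).real (Iic (Λ t - x₀))
  have hq : ∀ x ∈ Ioc 0 x₀, q * g x ≤ hittingProb W Λ t x * g x := fun x hx ↦
    mul_le_mul_of_nonneg_right
      ((measureReal_mono (Iic_subset_Iic.2 (by linarith [hx.2]))).trans
        (hW.gaussianReal_real_Iic_le_hittingProb ht x)) (hg0 x)
  calc q * ∫ y in Ioc 0 x₀, g y = ∫ y in Ioc 0 x₀, q * g y := (integral_const_mul q _).symm
    _ ≤ ∫ y in Ioc 0 x₀, hittingProb W Λ t y * g y :=
        integral_mono_of_nonneg (ae_of_all _ fun x ↦ mul_nonneg measureReal_nonneg (hg0 x))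
          (hint.mono_set Ioc_subset_Ioi_self)
          ((ae_restrict_iff' measurableSet_Ioc).2 (ae_of_all _ hq))
    _ ≤ ∫ x in Ioi 0, hittingProb W Λ t x * g x :=
        setIntegral_mono_set hint
          (ae_of_all _ fun x ↦ mul_nonneg (hittingProb_nonneg W Λ t x) (hg0 x))
          Ioc_subset_Ioi_self.eventuallyLE
    _ = Λ t := heq.symm

end IsStdBrownian

/-- Blow-up from supercritical mass: if g is bounded and int_0^{x0} g > 2 x0 for some x0 > 0,
then the McKean-Vlasov free-boundary equation admits no globally continuous solution. -/
theorem no_continuous_solution_of_mass (𝒲 : Measure (ℝ → ℝ)) (h𝒲 : IsStdBrownian 𝒲)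
    (g : ℝ → ℝ) (hgm : Measurable g) (hg0 : ∀ x, 0 ≤ g x)
    (C : ℝ) (hgC : ∀ x, g x ≤ C)
    (x₀ : ℝ) (hx₀ : 0 < x₀) (hmass : 2 * x₀ < ∫ y in Set.Ioc (0:ℝ) x₀, g y) :
    ¬ ∃ Λ : ℝ → ℝ, ContinuousOn Λ (Set.Ici 0) ∧ MonotoneOn Λ (Set.Ici 0) ∧ Λ 0 = 0 ∧
        ∀ t : ℝ, 0 ≤ t →
          Λ t = ∫ x in Set.Ioi (0:ℝ),
            (𝒲 {b | ∃ s ∈ Set.Icc 0 t, x + b s ≤ Λ s}).toReal * g x := by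
  rintro ⟨Λ, hcont, hmono, hΛ0, hΛ⟩
  set G := ∫ y in Ioc 0 x₀, g y
  have hG : 0 < G := by linarith
  have key : ∀ t, 0 ≤ t → (gaussianReal 0 t.toNNReal).real (Iic (Λ t - x₀)) * G ≤ Λ t :=
    fun t ht ↦ h𝒲.gaussianReal_real_Iic_mul_integral_le ht hg0
      (h𝒲.integrableOn_hittingProb_mul hmono ht hgm hg0 hgC) (hΛ t ht) x₀
  obtain ⟨t₁, hq, ht₁⟩ := ((eventually_lt_gaussianReal_real_Iic_neg hx₀.le
    (show x₀ / G < 1 / 2 by rw [div_lt_iff₀ hG]; linarith)).and (eventually_ge_atTop 0)).exists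
  have hΛt₁ : x₀ ≤ Λ t₁ := by
    have hΛnn : 0 ≤ Λ t₁ := hΛ0 ▸ hmono self_mem_Ici ht₁ ht₁
    have := (div_lt_iff₀ hG).1 (hq.trans_le (measureReal_mono
      (Iic_subset_Iic.2 (by linarith : -x₀ ≤ Λ t₁ - x₀))))
    linarith [key t₁ ht₁]
  obtain ⟨ts, hts, hΛts⟩ := intermediate_value_Icc ht₁ (hcont.mono Icc_subset_Ici_self)
    ⟨by rw [hΛ0]; exact hx₀.le, hΛt₁⟩
  have := key ts hts.1
  rw [hΛts, sub_self] at this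
  nlinarith [one_half_le_gaussianReal_real_Iic_zero ts.toNNReal]
end

section
/- Suppose g is bounded and satisfies the physical jump condition: at any jump time t of a solution Λ to the McKean–Vlasov Stefan equation, ∫_{Λ_{t−}}^{Λ_{t−}+x} V(t−,y) dy ≥ x for all 0 ≤ x ≤ ΔΛ_t. Then every term of the jump sum in the Laplace transform identity is nonpositive: for each jump time t and each λ > 0, −∫_{Λ_{t−}}^{Λ_t} V(t−,x) e^{−λx} dx − (1/λ)(e^{−λΛ_t} − e^{−λΛ_{t−}}) ≤ 0. -/
/-!
Put `W = V - 1`. The physical jump condition says exactly that the primitive `G x = ∫_a^x W` is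
nonnegative on `[a, b]`. Integrating by parts against the positive decreasing weight
`e^{-l y}` gives `∫_a^b e^{-l y} W y dy = e^{-l b} G b + l ∫_a^b e^{-l y} G y dy ≥ 0`,
and `∫_a^b e^{-l y} dy = (e^{-l a} - e^{-l b}) / l`.
-/

open MeasureTheory Set intervalIntegral

theorem intervalIntegral.integral_mul_eq_sub_integral_deriv_mul_primitive {f W : ℝ → ℝ}
    {a b : ℝ} (hf : AbsolutelyContinuousOnInterval f a b)
    (hW : IntervalIntegrable W volume a b) :
    ∫ x in a..b, f x * W x =
      f b * (∫ x in a..b, W x) - ∫ x in a..b, deriv f x * ∫ t in a..x, W t := by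
  have hG := hW.absolutelyContinuousOnInterval_intervalIntegral left_mem_uIcc
  have hW_eq_deriv :
      ∫ x in a..b, f x * W x = ∫ x in a..b, f x * deriv (fun x ↦ ∫ t in a..x, W t) x := by
    refine integral_congr_ae ?_
    filter_upwards [hW.ae_hasDerivAt_integral] with x hx hx_mem
    rw [(hx (uIoc_subset_uIcc hx_mem) a left_mem_uIcc).deriv]
  rw [hW_eq_deriv, hf.integral_mul_deriv_eq_deriv_mul hG]
  simp

theorem intervalIntegral.integral_mul_nonneg_of_antitoneOn {f W : ℝ → ℝ} {a b : ℝ}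
    (hab : a ≤ b) (hf : AbsolutelyContinuousOnInterval f a b) (hf_anti : AntitoneOn f (Icc a b))
    (hfb : 0 ≤ f b) (hW : IntervalIntegrable W volume a b)
    (hW_primitive : ∀ x ∈ Icc a b, 0 ≤ ∫ t in a..x, W t) :
    0 ≤ ∫ x in a..b, f x * W x := by
  rw [integral_mul_eq_sub_integral_deriv_mul_primitive hf hW]
  have hboundary : 0 ≤ f b * ∫ x in a..b, W x :=
    mul_nonneg hfb (hW_primitive b ⟨hab, le_rfl⟩)
  have hinterior : 0 ≤ ∫ x in a..b, -(deriv f x * ∫ t in a..x, W t) := by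
    refine integral_nonneg_of_ae_restrict hab ?_
    have hIoo : ∀ᵐ x ∂volume.restrict (Icc a b), x ∈ Ioo a b := by
      rw [← Measure.restrict_congr_set Ioo_ae_eq_Icc]
      exact ae_restrict_mem measurableSet_Ioo
    filter_upwards [hIoo] with x hx
    have hderiv : deriv f x ≤ 0 := by
      rw [← derivWithin_of_mem_nhds (Icc_mem_nhds hx.1 hx.2)]
      exact hf_anti.derivWithin_nonpos
    exact neg_nonneg.mpr
      (mul_nonpos_of_nonpos_of_nonneg hderiv (hW_primitive x (Ioo_subset_Icc_self hx)))
  rw [integral_neg] at hinterior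
  linarith

theorem integral_exp_neg_mul {l : ℝ} (hl : l ≠ 0) (a b : ℝ) :
    ∫ y in a..b, Real.exp (-l * y) = (1 / l) * (Real.exp (-l * a) - Real.exp (-l * b)) := by
  rw [integral_comp_mul_left Real.exp (neg_ne_zero.mpr hl), integral_exp, smul_eq_mul]
  field_simp
  ring

theorem physical_jump_term_nonpos_general (a b l : ℝ) (hab : a ≤ b) (hl : 0 < l)
    (V : ℝ → ℝ)
    (hVint : IntervalIntegrable V volume a b)
    (hphys : ∀ x ∈ Set.Icc 0 (b - a), x ≤ ∫ y in a..(a + x), V y) :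
    -(∫ y in a..b, V y * Real.exp (-l * y)) -
        (1 / l) * (Real.exp (-l * b) - Real.exp (-l * a)) ≤ 0 := by
  have hexp_cont : Continuous fun y ↦ Real.exp (-l * y) := by fun_prop
  have hexp_anti : Antitone fun y ↦ Real.exp (-l * y) := fun x y hxy ↦
    Real.exp_le_exp.mpr (by nlinarith)
  have hexp_ac : AbsolutelyContinuousOnInterval (fun y ↦ Real.exp (-l * y)) a b :=
    ContDiffOn.absolutelyContinuousOnInterval (by fun_prop)
  have hexcess : IntervalIntegrable (fun y ↦ V y - 1) volume a b :=
    hVint.sub intervalIntegrable_const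
  have hexcess_primitive : ∀ x ∈ Icc a b, 0 ≤ ∫ t in a..x, (V t - 1) := by
    intro x hx
    have := hphys (x - a) ⟨by linarith [hx.1], by linarith [hx.2]⟩
    rw [add_sub_cancel] at this
    rw [integral_sub (hVint.mono_set (uIcc_subset_uIcc left_mem_uIcc (by rwa [uIcc_of_le hab])))
      intervalIntegrable_const]
    simpa using this
  have hweighted := integral_mul_nonneg_of_antitoneOn hab hexp_ac (hexp_anti.antitoneOn _)
    (Real.exp_pos _).le hexcess hexcess_primitive
  have hsplit : ∫ y in a..b, Real.exp (-l * y) * (V y - 1) =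
      (∫ y in a..b, V y * Real.exp (-l * y)) - ∫ y in a..b, Real.exp (-l * y) := by
    simp_rw [mul_sub, mul_one, mul_comm (Real.exp _)]
    exact integral_sub (hVint.mul_continuousOn hexp_cont.continuousOn)
      (hexp_cont.intervalIntegrable a b)
  rw [hsplit, integral_exp_neg_mul hl.ne'] at hweighted
  linarith

/-- Each jump term in the Laplace-transform identity is nonpositive under the physical jump
condition: if V >= 0 on [a,b] with int_a^{a+x} V >= x for all x in [0, b-a] and
int_a^b V = b - a, then for every l > 0,
-int_a^b V(x) e^{-l x} dx - (1/l)(e^{-l b} - e^{-l a}) <= 0. -/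
theorem physical_jump_term_nonpos (a b l : ℝ) (hab : a ≤ b) (hl : 0 < l)
    (V : ℝ → ℝ) (hV0 : ∀ x ∈ Set.Icc a b, 0 ≤ V x)
    (hVint : IntervalIntegrable V volume a b)
    (hphys : ∀ x ∈ Set.Icc 0 (b - a), x ≤ ∫ y in a..(a + x), V y)
    (htot : (∫ y in a..b, V y) = b - a) :
    -(∫ y in a..b, V y * Real.exp (-l * y)) -
        (1 / l) * (Real.exp (-l * b) - Real.exp (-l * a)) ≤ 0 :=
  physical_jump_term_nonpos_general a b l hab hl V hVint hphys
end

section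
/- Suppose g is measurable, bounded, satisfies the physical jump condition, 1 − g ∈ L¹([0,∞)), and a global solution Λ of the McKean–Vlasov Stefan equation exists with finitely many jumps before some time τ*, after which the restarted density is continuous and strictly less than 1. Then, writing 2/K = ∫_0^∞ (1 − g(x)) dx, the Laplace transforms satisfy |∫_0^∞ (1−g(x)) e^{−λx} dx − ∫_{Λ_{τ*}}^∞ (1 − V(τ*,x)) e^{−λx − λ²τ*/2} dx| ≤ λτ*/2 + C λ Λ_{τ*}², and in particular ∫_0^∞ (1 − Ṽ(τ*,x)) dx = ∫_0^∞ (1 − g(x)) dx = 2/K, where Ṽ(τ*,x) = V(τ*, x + Λ_{τ*}). -/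
/-!
Let `l ↓ 0` in the Laplace-transform identity. The continuous part of its right-hand side is
at most `l τ* / 2` because its integrand lies in `(0, 1]`. In a jump from `a = Λ_{t-}` to
`b = Λ_t` both `∫_a^b Vm e^{-l y} dy` (since `∫_a^b Vm = b - a`) and `(e^{-l a} - e^{-l b}) / l`
lie between `(b - a) e^{-l b}` and `(b - a) e^{-l a}`, so they differ by at most `l (b - a)²`.
The jump intervals are disjoint subintervals of `[0, Λ_{τ*}]`, so the squared jump sizes add up
to at most `Λ_{τ*}²`. Hence the difference of the two Laplace transforms is `O(l)`, and dominated
convergence identifies the limits as the two masses.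
-/

open MeasureTheory Filter Set Topology Function Real

theorem MonotoneOn.le_leftLim {f : ℝ → ℝ} {a b x y : ℝ}
    (hf : MonotoneOn f (Icc a b)) (hax : a ≤ x) (hxy : x < y) (hyb : y ≤ b) :
    f x ≤ leftLim f y := by
  have hx : x ∈ Icc a b := ⟨hax, hxy.le.trans hyb⟩
  have hIoo : Ioo x y ⊆ Icc a b := fun z hz => ⟨hax.trans hz.1.le, hz.2.le.trans hyb⟩
  have hbdd : BddAbove (f '' Ioo x y) := by
    refine ⟨f b, ?_⟩
    rintro _ ⟨z, hz, rfl⟩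
    exact hf (hIoo hz) ⟨hax.trans (hxy.le.trans hyb), le_rfl⟩ (hIoo hz).2
  have hlim := (hf.mono hIoo).tendsto_nhdsWithin_Ioo_left (nonempty_Ioo.2 hxy) hbdd
  rw [leftLim_eq_of_tendsto hlim]
  refine ge_of_tendsto hlim ?_
  filter_upwards [Ioo_mem_nhdsLT hxy] with z hz
  exact hf hx (hIoo hz) hz.1.le

theorem sum_sub_le_of_intervals_ordered {ι : Type*} [LinearOrder ι] (J : Finset ι)
    {a b : ι → ℝ} {lo hi : ℝ} (hlohi : lo ≤ hi)
    (hab : ∀ s ∈ J, lo ≤ a s ∧ a s ≤ b s ∧ b s ≤ hi)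
    (hord : ∀ s ∈ J, ∀ t ∈ J, s < t → b s ≤ a t) :
    ∑ s ∈ J, (b s - a s) ≤ hi - lo := by
  induction J using Finset.induction_on_max generalizing hi with
  | empty => simpa using hlohi
  | insert m J hmax ih =>
    have hm : m ∉ J := fun h => lt_irrefl m (hmax m h)
    obtain ⟨hlo, -, hhi⟩ := hab m (Finset.mem_insert_self m J)
    have hJ : ∑ s ∈ J, (b s - a s) ≤ a m - lo := by
      refine ih hlo (fun s hs => ?_) (fun s hs t ht => hord s (by simp [hs]) t (by simp [ht]))
      obtain ⟨h1, h2, -⟩ := hab s (Finset.mem_insert_of_mem hs)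
      exact ⟨h1, h2, hord s (Finset.mem_insert_of_mem hs) m (Finset.mem_insert_self m J)
        (hmax s hs)⟩
    rw [Finset.sum_insert hm]
    linarith

theorem sub_mul_exp_le_exp_sub_exp_div {l a b : ℝ} (hl : 0 < l) :
    (b - a) * exp (-l * b) ≤ (exp (-l * a) - exp (-l * b)) / l ∧
      (exp (-l * a) - exp (-l * b)) / l ≤ (b - a) * exp (-l * a) := by
  have hlow : (l * (b - a) + 1) * exp (-l * b) ≤ exp (-l * a) :=
    calc (l * (b - a) + 1) * exp (-l * b) ≤ exp (l * (b - a)) * exp (-l * b) := by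
          gcongr; exact add_one_le_exp _
      _ = exp (-l * a) := by rw [← exp_add]; ring_nf
  have hupp : (-(l * (b - a)) + 1) * exp (-l * a) ≤ exp (-l * b) :=
    calc (-(l * (b - a)) + 1) * exp (-l * a) ≤ exp (-(l * (b - a))) * exp (-l * a) := by
          gcongr; exact add_one_le_exp _
      _ = exp (-l * b) := by rw [← exp_add]; ring_nf
  constructor
  · rw [le_div_iff₀ hl]; linarith
  · rw [div_le_iff₀ hl]; linarith

theorem integral_mul_exp_neg_mem_Icc {v : ℝ → ℝ} {l a b : ℝ} (hl : 0 ≤ l) (hab : a ≤ b)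
    (hv : ∀ x ∈ Icc a b, 0 ≤ v x) (hvi : IntervalIntegrable v volume a b) :
    (∫ y in a..b, v y) * exp (-l * b) ≤ ∫ y in a..b, v y * exp (-l * y) ∧
      ∫ y in a..b, v y * exp (-l * y) ≤ (∫ y in a..b, v y) * exp (-l * a) := by
  have hvie : IntervalIntegrable (fun y => v y * exp (-l * y)) volume a b :=
    hvi.mul_continuousOn (by fun_prop)
  rw [← intervalIntegral.integral_mul_const, ← intervalIntegral.integral_mul_const]
  constructor
  · refine intervalIntegral.integral_mono_on hab (hvi.mul_const _) hvie fun x hx => ?_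
    exact mul_le_mul_of_nonneg_left (exp_le_exp.2 (by nlinarith [hx.2])) (hv x hx)
  · refine intervalIntegral.integral_mono_on hab hvie (hvi.mul_const _) fun x hx => ?_
    exact mul_le_mul_of_nonneg_left (exp_le_exp.2 (by nlinarith [hx.1])) (hv x hx)

theorem abs_jump_term_le {v : ℝ → ℝ} {C l a b : ℝ} (hl : 0 < l) (ha : 0 ≤ a) (hab : a ≤ b)
    (hv : ∀ x ∈ Icc a b, 0 ≤ v x ∧ v x ≤ C) (hmass : ∫ y in a..b, v y = b - a) :
    |-(∫ y in a..b, v y * exp (-l * y)) - (1 / l) * (exp (-l * b) - exp (-l * a))|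
      ≤ C * l * (b - a) ^ 2 := by
  rcases hab.eq_or_lt with rfl | hlt
  · simp
  have hvi : IntervalIntegrable v volume a b :=
    intervalIntegral.intervalIntegrable_of_integral_ne_zero (by rw [hmass]; linarith)
  have hmassC : b - a ≤ (b - a) * C :=
    calc b - a = ∫ y in a..b, v y := hmass.symm
      _ ≤ ∫ _ in a..b, C :=
        intervalIntegral.integral_mono_on hab hvi intervalIntegrable_const fun x hx => (hv x hx).2
      _ = (b - a) * C := by simp
  obtain ⟨hA₁, hA₂⟩ := integral_mul_exp_neg_mem_Icc hl.le hab (fun x hx => (hv x hx).1) hvi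
  obtain ⟨hE₁, hE₂⟩ := sub_mul_exp_le_exp_sub_exp_div (a := a) (b := b) hl
  rw [hmass] at hA₁ hA₂
  have hexp : exp (-l * a) ≤ 1 := exp_le_one_iff.2 (by nlinarith)
  have hdiff : exp (-l * a) - exp (-l * b) ≤ l * (b - a) := by
    rw [div_le_iff₀ hl] at hE₂
    nlinarith [mul_le_mul_of_nonneg_left hexp (by positivity : 0 ≤ (b - a) * l)]
  calc |-(∫ y in a..b, v y * exp (-l * y)) - (1 / l) * (exp (-l * b) - exp (-l * a))|
      = |(exp (-l * a) - exp (-l * b)) / l - ∫ y in a..b, v y * exp (-l * y)| := by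
        congr 1; field_simp; ring
    _ ≤ (b - a) * exp (-l * a) - (b - a) * exp (-l * b) :=
        abs_sub_le_of_le_of_le hE₁ hE₂ hA₁ hA₂
    _ = (b - a) * (exp (-l * a) - exp (-l * b)) := by ring
    _ ≤ (b - a) * (l * (b - a)) := by gcongr
    _ = l * (b - a) * (b - a) := by ring
    _ ≤ l * (b - a) * ((b - a) * C) := mul_le_mul_of_nonneg_left hmassC (by nlinarith)
    _ = C * l * (b - a) ^ 2 := by ring

theorem abs_sum_jump_terms_le (J : Finset ℝ) {a b : ℝ → ℝ} {v : ℝ → ℝ → ℝ} {C l M : ℝ}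
    (hC : 0 ≤ C) (hl : 0 < l) (hM : 0 ≤ M)
    (hJ : ∀ s ∈ J, 0 ≤ s ∧ 0 ≤ a s ∧ a s ≤ b s ∧ b s ≤ M)
    (hord : ∀ s ∈ J, ∀ t ∈ J, s < t → b s ≤ a t)
    (hv : ∀ s ∈ J, ∀ x ∈ Icc (a s) (b s), 0 ≤ v s x ∧ v s x ≤ C)
    (hmass : ∀ s ∈ J, ∫ y in a s..b s, v s y = b s - a s) :
    |∑ s ∈ J, exp (-l ^ 2 * s / 2) *
        (-(∫ y in a s..b s, v s y * exp (-l * y)) - (1 / l) * (exp (-l * b s) - exp (-l * a s)))|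
      ≤ C * l * M ^ 2 := by
  have hlen : ∑ s ∈ J, (b s - a s) ≤ M - 0 :=
    sum_sub_le_of_intervals_ordered J hM (fun s hs => (hJ s hs).2) hord
  have hsq : ∑ s ∈ J, (b s - a s) ^ 2 ≤ M ^ 2 :=
    calc ∑ s ∈ J, (b s - a s) ^ 2 ≤ ∑ s ∈ J, (b s - a s) * M := by
          refine Finset.sum_le_sum fun s hs => ?_
          obtain ⟨-, ha, hab, hb⟩ := hJ s hs
          rw [sq]
          exact mul_le_mul_of_nonneg_left (by linarith) (by linarith)
      _ = (∑ s ∈ J, (b s - a s)) * M := (Finset.sum_mul _ _ _).symm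
      _ ≤ M * M := by gcongr; linarith
      _ = M ^ 2 := (sq M).symm
  calc _ ≤ ∑ s ∈ J, |exp (-l ^ 2 * s / 2) *
        (-(∫ y in a s..b s, v s y * exp (-l * y)) - (1 / l) * (exp (-l * b s) - exp (-l * a s)))| :=
        Finset.abs_sum_le_sum_abs _ _
    _ ≤ ∑ s ∈ J, C * l * (b s - a s) ^ 2 := by
        refine Finset.sum_le_sum fun s hs => ?_
        obtain ⟨hs0, ha, hab, -⟩ := hJ s hs
        rw [abs_mul, abs_exp]
        refine (mul_le_of_le_one_left (abs_nonneg _) (exp_le_one_iff.2 ?_)).trans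
          (abs_jump_term_le hl ha hab (hv s hs) (hmass s hs))
        nlinarith [sq_nonneg l]
    _ = C * l * ∑ s ∈ J, (b s - a s) ^ 2 := (Finset.mul_sum _ _ _).symm
    _ ≤ C * l * M ^ 2 := by gcongr

theorem abs_mul_integral_exp_neg_le {φ : ℝ → ℝ} {l τ : ℝ} (hl : 0 ≤ l) (hτ : 0 ≤ τ)
    (hφ : ∀ s ∈ Ioc 0 τ, 0 ≤ φ s) :
    |l / 2 * ∫ s in (0 : ℝ)..τ, exp (-l * φ s - l ^ 2 * s / 2)| ≤ l * τ / 2 := by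
  have hint : ‖∫ s in (0 : ℝ)..τ, exp (-l * φ s - l ^ 2 * s / 2)‖ ≤ 1 * |τ - 0| := by
    refine intervalIntegral.norm_integral_le_of_norm_le_const fun s hs => ?_
    rw [uIoc_of_le hτ] at hs
    rw [norm_eq_abs, abs_exp, exp_le_one_iff]
    nlinarith [hφ s hs, hs.1, sq_nonneg l]
  rw [norm_eq_abs, one_mul, sub_zero, abs_of_nonneg hτ] at hint
  rw [abs_mul, abs_of_nonneg (by positivity)]
  calc l / 2 * |∫ s in (0 : ℝ)..τ, exp (-l * φ s - l ^ 2 * s / 2)| ≤ l / 2 * τ := by gcongr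
    _ = l * τ / 2 := by ring

theorem tendsto_setIntegral_mul_exp_neg_nhdsGT_zero {f : ℝ → ℝ} {a c : ℝ} (ha : 0 ≤ a)
    (hc : 0 ≤ c) (hf : IntegrableOn f (Ioi a)) :
    Tendsto (fun l => ∫ x in Ioi a, f x * exp (-l * x - l ^ 2 * c / 2)) (𝓝[>] 0)
      (𝓝 (∫ x in Ioi a, f x)) := by
  refine tendsto_integral_filter_of_dominated_convergence (fun x => |f x|) ?_ ?_ hf.abs ?_
  · exact Eventually.of_forall fun l =>
      hf.aestronglyMeasurable.mul (by fun_prop : Continuous _).aestronglyMeasurable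
  · filter_upwards [self_mem_nhdsWithin] with l (hl : 0 < l)
    filter_upwards [ae_restrict_mem measurableSet_Ioi] with x (hx : a < x)
    rw [norm_mul, norm_eq_abs, norm_eq_abs, abs_exp]
    refine mul_le_of_le_one_right (abs_nonneg _) (exp_le_one_iff.2 ?_)
    nlinarith [sq_nonneg l]
  · refine ae_of_all _ fun x => ?_
    have hcont : Continuous fun l : ℝ => f x * exp (-l * x - l ^ 2 * c / 2) := by fun_prop
    simpa using (hcont.tendsto 0).mono_left nhdsWithin_le_nhds

theorem eq_of_tendsto_of_abs_sub_le_mul {F G : ℝ → ℝ} {A B K : ℝ}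
    (hF : Tendsto F (𝓝[>] 0) (𝓝 A)) (hG : Tendsto G (𝓝[>] 0) (𝓝 B))
    (hFG : ∀ l : ℝ, 0 < l → |F l - G l| ≤ l * K) : A = B := by
  have hK : Tendsto (fun l => l * K) (𝓝[>] 0) (𝓝 0) := by
    simpa using ((tendsto_id (x := 𝓝 (0 : ℝ))).mul_const K).mono_left nhdsWithin_le_nhds
  have hAB : |A - B| ≤ 0 :=
    le_of_tendsto_of_tendsto (hF.sub hG).abs hK (eventually_nhdsWithin_of_forall hFG)
  exact sub_eq_zero.1 (abs_nonpos_iff.1 hAB)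

theorem integral_Ioi_comp_add_right {E : Type*} [NormedAddCommGroup E] [NormedSpace ℝ E]
    (f : ℝ → E) (c : ℝ) : ∫ x in Ioi 0, f (x + c) = ∫ x in Ioi c, f x := by
  have hpre : (fun x => x + c) ⁻¹' Ioi c = Ioi 0 := by ext x; simp
  rw [← hpre]
  exact (measurePreserving_add_right volume c).setIntegral_preimage_emb
    (measurableEmbedding_addRight c) f (Ioi c)

theorem latent_heat_conservation_general
    (g : ℝ → ℝ)
    (C : ℝ) (hC : 0 < C)
    (hL1 : IntegrableOn (fun x => 1 - g x) (Set.Ioi 0))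
    (K : ℝ) (hmass : (∫ x in Set.Ioi (0:ℝ), (1 - g x)) = 2 / K)
    (τs : ℝ) (hτs : 0 < τs)
    (Λ : ℝ → ℝ) (hΛmono : MonotoneOn Λ (Set.Icc 0 τs)) (hΛ0 : 0 ≤ Λ 0)
    (V : ℝ → ℝ)
    (hVL1 : IntegrableOn (fun x => 1 - V x) (Set.Ioi (Λ τs)))
    (J : Finset ℝ) (hJsub : ∀ s ∈ J, s ∈ Set.Icc 0 τs ∧
      0 ≤ Function.leftLim Λ s ∧ Function.leftLim Λ s ≤ Λ s ∧ Λ s ≤ Λ τs)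
    (Vm : ℝ → ℝ → ℝ) (hVm : ∀ s ∈ J, ∀ x, 0 ≤ Vm s x ∧ Vm s x ≤ C)
    (htotjump : ∀ s ∈ J,
      (∫ y in (Function.leftLim Λ s)..(Λ s), Vm s y) = Λ s - Function.leftLim Λ s)
    (hLap : ∀ l : ℝ, 0 < l →
      (∫ x in Set.Ioi (0:ℝ), (1 - g x) * Real.exp (-l * x)) -
        (∫ x in Set.Ioi (Λ τs), (1 - V x) * Real.exp (-l * x - l ^ 2 * τs / 2))
      = (l / 2) *
          (∫ s in (0:ℝ)..τs, Real.exp (-l * Function.leftLim Λ s - l ^ 2 * s / 2)) +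
        ∑ s ∈ J, Real.exp (-l ^ 2 * s / 2) *
          (-(∫ y in (Function.leftLim Λ s)..(Λ s), Vm s y * Real.exp (-l * y)) -
            (1 / l) * (Real.exp (-l * Λ s) - Real.exp (-l * Function.leftLim Λ s)))) :
    (∀ l : ℝ, 0 < l →
      |(∫ x in Set.Ioi (0:ℝ), (1 - g x) * Real.exp (-l * x)) -
          (∫ x in Set.Ioi (Λ τs), (1 - V x) * Real.exp (-l * x - l ^ 2 * τs / 2))|
        ≤ l * τs / 2 + C * l * (Λ τs) ^ 2) ∧
    (∫ x in Set.Ioi (0:ℝ), (1 - V (x + Λ τs))) = (∫ x in Set.Ioi (0:ℝ), (1 - g x)) ∧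
    (∫ x in Set.Ioi (0:ℝ), (1 - V (x + Λ τs))) = 2 / K := by
  have hΛτs : 0 ≤ Λ τs := hΛ0.trans (hΛmono ⟨le_rfl, hτs.le⟩ ⟨hτs.le, le_rfl⟩ hτs.le)
  have hbound : ∀ l : ℝ, 0 < l →
      |(∫ x in Ioi (0:ℝ), (1 - g x) * exp (-l * x)) -
          (∫ x in Ioi (Λ τs), (1 - V x) * exp (-l * x - l ^ 2 * τs / 2))|
        ≤ l * τs / 2 + C * l * (Λ τs) ^ 2 := by
    intro l hl
    rw [hLap l hl]
    refine (abs_add_le _ _).trans (add_le_add ?_ ?_)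
    · exact abs_mul_integral_exp_neg_le hl.le hτs.le fun s hs =>
        hΛ0.trans (hΛmono.le_leftLim le_rfl hs.1 hs.2)
    · refine abs_sum_jump_terms_le J hC.le hl hΛτs (fun s hs => ?_)
        (fun s hs t ht hst => ?_) (fun s hs x _ => hVm s hs x) htotjump
      · obtain ⟨⟨hs0, -⟩, hjump⟩ := hJsub s hs
        exact ⟨hs0, hjump⟩
      · exact hΛmono.le_leftLim (hJsub s hs).1.1 hst (hJsub t ht).1.2
  have hconserved : ∫ x in Ioi 0, (1 - V (x + Λ τs)) = ∫ x in Ioi 0, (1 - g x) := by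
    have hg : Tendsto (fun l => ∫ x in Ioi 0, (1 - g x) * exp (-l * x)) (𝓝[>] 0)
        (𝓝 (∫ x in Ioi 0, (1 - g x))) := by
      simpa using tendsto_setIntegral_mul_exp_neg_nhdsGT_zero le_rfl le_rfl hL1
    have hV := tendsto_setIntegral_mul_exp_neg_nhdsGT_zero hΛτs hτs.le hVL1
    rw [integral_Ioi_comp_add_right (fun x => 1 - V x)]
    refine (eq_of_tendsto_of_abs_sub_le_mul (K := τs / 2 + C * Λ τs ^ 2) hg hV
      fun l hl => ?_).symm
    exact (hbound l hl).trans_eq (by ring)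
  exact ⟨hbound, hconserved, hconserved.trans hmass⟩

/-- Conservation of latent heat across finitely many physical jumps: if 1 - g is integrable
with int (1-g) = 2/K, the free boundary Lambda has finitely many jumps (times J) before
tau*, all physical, the surviving density V at tau* lies in [0,1] beyond Lambda_{tau*}, the
left-limit densities Vm are bounded by C, and the Laplace-transform identity holds, then
|int_0^inf (1-g) e^{-l x} dx - int_{Lambda_{tau*}}^inf (1-V) e^{-l x - l^2 tau*/2} dx|
  <= l tau*/2 + C l Lambda_{tau*}^2 for every l > 0, and consequently
int_0^inf (1 - V(tau*, x + Lambda_{tau*})) dx = int_0^inf (1 - g) dx = 2/K. -/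
theorem latent_heat_conservation
    (g : ℝ → ℝ) (hgm : Measurable g) (hg0 : ∀ x, 0 ≤ g x)
    (C : ℝ) (hC : 0 < C) (hgC : ∀ x, g x ≤ C)
    (hL1 : IntegrableOn (fun x => 1 - g x) (Set.Ioi 0))
    (K : ℝ) (hK : 0 < K) (hmass : (∫ x in Set.Ioi (0:ℝ), (1 - g x)) = 2 / K)
    (τs : ℝ) (hτs : 0 < τs)
    (Λ : ℝ → ℝ) (hΛmono : MonotoneOn Λ (Set.Icc 0 τs)) (hΛ0 : 0 ≤ Λ 0)
    (V : ℝ → ℝ) (hV01 : ∀ x, Λ τs ≤ x → 0 ≤ V x ∧ V x ≤ 1)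
    (hVL1 : IntegrableOn (fun x => 1 - V x) (Set.Ioi (Λ τs)))
    (J : Finset ℝ) (hJsub : ∀ s ∈ J, s ∈ Set.Icc 0 τs ∧
      0 ≤ Function.leftLim Λ s ∧ Function.leftLim Λ s ≤ Λ s ∧ Λ s ≤ Λ τs)
    (Vm : ℝ → ℝ → ℝ) (hVm : ∀ s ∈ J, ∀ x, 0 ≤ Vm s x ∧ Vm s x ≤ C)
    (hphys : ∀ s ∈ J, ∀ x ∈ Set.Icc 0 (Λ s - Function.leftLim Λ s),
      x ≤ ∫ y in (Function.leftLim Λ s)..(Function.leftLim Λ s + x), Vm s y)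
    (htotjump : ∀ s ∈ J,
      (∫ y in (Function.leftLim Λ s)..(Λ s), Vm s y) = Λ s - Function.leftLim Λ s)
    (hLap : ∀ l : ℝ, 0 < l →
      (∫ x in Set.Ioi (0:ℝ), (1 - g x) * Real.exp (-l * x)) -
        (∫ x in Set.Ioi (Λ τs), (1 - V x) * Real.exp (-l * x - l ^ 2 * τs / 2))
      = (l / 2) *
          (∫ s in (0:ℝ)..τs, Real.exp (-l * Function.leftLim Λ s - l ^ 2 * s / 2)) +
        ∑ s ∈ J, Real.exp (-l ^ 2 * s / 2) *
          (-(∫ y in (Function.leftLim Λ s)..(Λ s), Vm s y * Real.exp (-l * y)) -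
            (1 / l) * (Real.exp (-l * Λ s) - Real.exp (-l * Function.leftLim Λ s)))) :
    (∀ l : ℝ, 0 < l →
      |(∫ x in Set.Ioi (0:ℝ), (1 - g x) * Real.exp (-l * x)) -
          (∫ x in Set.Ioi (Λ τs), (1 - V x) * Real.exp (-l * x - l ^ 2 * τs / 2))|
        ≤ l * τs / 2 + C * l * (Λ τs) ^ 2) ∧
    (∫ x in Set.Ioi (0:ℝ), (1 - V (x + Λ τs))) = (∫ x in Set.Ioi (0:ℝ), (1 - g x)) ∧
    (∫ x in Set.Ioi (0:ℝ), (1 - V (x + Λ τs))) = 2 / K :=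
  latent_heat_conservation_general g C hC hL1 K hmass τs hτs Λ hΛmono hΛ0 V hVL1 J hJsub Vm hVm
    htotjump hLap
end

section
/- Let β ∈ (0,1) and define g(x) = 0 for x ∈ [0,1] and g(x) = 1 + β/x^{β+1} for x > 1 (i.e. g = 1 − h with h = 1 on [0,1], h(x) = −β x^{−β−1} for x > 1). Then ∫_0^∞ g(x) e^{−λx} dx = 1/λ − Γ(1−β) λ^{β} + O(λ) as λ → 0, where Γ denotes the Gamma function; in particular lim sup_{λ→0} (1/λ) ∫_0^∞ (1 − g(x)) e^{−λx} dx = +∞. -/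
/-!
On `(1, ∞)` we have `β x^(-β-1) = -(x^(-β))'`, so integrating by parts gives
`∫₀^∞ g(x) e^(-λx) dx = e^(-λ)/λ + e^(-λ) - λ ∫₁^∞ x^(-β) e^(-λx) dx`, and the last integral is
`Γ(1-β) λ^(β-1) - ∫₀¹ x^(-β) e^(-λx) dx`. The remaining terms are `O(λ)`:
`0 ≤ λ ∫₀¹ x^(-β) e^(-λx) dx ≤ λ/(1-β)` and `|(1+λ) e^(-λ) - 1| ≤ λ²`.
Since `∫₀^∞ (1-g(x)) e^(-λx) dx = 1/λ - ∫₀^∞ g(x) e^(-λx) dx`, dividing by `λ` leaves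
`Γ(1-β) λ^(β-1) + O(1)`, which tends to `∞` as `λ → 0⁺`.
-/

open MeasureTheory Filter Set Real
open scoped Topology

variable {β l : ℝ}

lemma integral_exp_neg_mul_Ioi (hl : 0 < l) (a : ℝ) :
    ∫ x in Ioi a, exp (-l * x) = exp (-l * a) / l := by
  rw [integral_exp_mul_Ioi (neg_lt_zero.2 hl), neg_div_neg_eq]

lemma integrableOn_Ioi_one_rpow_mul_exp_neg_mul {s : ℝ} (hs : s ≤ 0) (hl : 0 < l) :
    IntegrableOn (fun x => x ^ s * exp (-l * x)) (Ioi 1) := by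
  refine (exp_neg_integrableOn_Ioi 1 hl).mono' ?_ ?_
  · exact (ContinuousOn.mul (continuousOn_id.rpow_const fun x hx => Or.inl
      (zero_lt_one.trans hx).ne') (by fun_prop)).aestronglyMeasurable measurableSet_Ioi
  · refine (ae_restrict_iff' measurableSet_Ioi).2 (ae_of_all _ fun x hx => ?_)
    have hx : 1 ≤ x := le_of_lt hx
    rw [norm_mul, norm_of_nonneg (rpow_nonneg (zero_le_one.trans hx) _),
      norm_of_nonneg (exp_pos _).le]
    exact mul_le_of_le_one_left (exp_pos _).le (rpow_le_one_of_one_le_of_nonpos hx hs)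

lemma integrableOn_Ioi_zero_rpow_mul_exp_neg_mul (hβ : β < 1) (hl : 0 < l) :
    IntegrableOn (fun x => x ^ (-β) * exp (-l * x)) (Ioi 0) := by
  simpa using integrableOn_rpow_mul_exp_neg_mul_rpow (p := 1) (by linarith) one_pos hl

lemma integral_Ioi_one_rpow_mul_exp_neg_mul_by_parts (hβ : 0 ≤ β) (hl : 0 < l) :
    β * ∫ x in Ioi 1, x ^ (-β - 1) * exp (-l * x)
      = exp (-l) - l * ∫ x in Ioi 1, x ^ (-β) * exp (-l * x) := by
  have hderiv : ∀ x ∈ Ici (1 : ℝ), HasDerivAt (fun x => -(x ^ (-β) * exp (-l * x)))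
      (β * (x ^ (-β - 1) * exp (-l * x)) + l * (x ^ (-β) * exp (-l * x))) x := by
    intro x hx
    have hx0 : x ≠ 0 := (zero_lt_one.trans_le hx).ne'
    have hpow : HasDerivAt (fun x => x ^ (-β)) (-β * x ^ (-β - 1)) x :=
      hasDerivAt_rpow_const (Or.inl hx0)
    have hexp : HasDerivAt (fun x => exp (-l * x)) (exp (-l * x) * (-l)) x := by
      simpa using ((hasDerivAt_id x).const_mul (-l)).exp
    exact (hpow.mul hexp).neg.congr_deriv (by ring)
  have hint₁ :=
    (integrableOn_Ioi_one_rpow_mul_exp_neg_mul (s := -β - 1) (by linarith) hl).const_mul β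
  have hint₂ := (integrableOn_Ioi_one_rpow_mul_exp_neg_mul (neg_nonpos.2 hβ) hl).const_mul l
  have hlim : Tendsto (fun x => -(x ^ (-β) * exp (-l * x))) atTop (𝓝 0) := by
    simpa using (tendsto_rpow_mul_exp_neg_mul_atTop_nhds_zero (-β) l hl).neg
  have hftc := integral_Ioi_of_hasDerivAt_of_tendsto' hderiv (hint₁.add hint₂) hlim
  rw [integral_add hint₁ hint₂, integral_const_mul, integral_const_mul] at hftc
  simp only [one_rpow, one_mul, mul_one] at hftc
  linarith

lemma integral_Ioi_one_rpow_mul_exp_neg_mul_eq_Gamma_sub (hβ : β < 1) (hl : 0 < l) :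
    ∫ x in Ioi 1, x ^ (-β) * exp (-l * x)
      = Gamma (1 - β) * l ^ (β - 1) - ∫ x in Ioc 0 1, x ^ (-β) * exp (-l * x) := by
  have hint := integrableOn_Ioi_zero_rpow_mul_exp_neg_mul hβ hl
  have hGamma : ∫ x in Ioi 0, x ^ (-β) * exp (-l * x) = Gamma (1 - β) * l ^ (β - 1) := by
    have h := integral_rpow_mul_exp_neg_mul_Ioi (a := 1 - β) (by linarith) hl
    simp only [sub_sub_cancel_left, neg_mul] at h ⊢
    rw [h, one_div, inv_rpow hl.le, ← rpow_neg hl.le, neg_sub, mul_comm]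
  rw [← hGamma, ← Ioc_union_Ioi_eq_Ioi zero_le_one, setIntegral_union (Ioc_disjoint_Ioi le_rfl)
    measurableSet_Ioi (hint.mono_set Ioc_subset_Ioi_self)
    (hint.mono_set (Ioi_subset_Ioi zero_le_one))]
  ring

lemma integral_Ioc_zero_one_rpow_mul_exp_neg_mul_le (hβ : β < 1) (hl : 0 < l) :
    ∫ x in Ioc 0 1, x ^ (-β) * exp (-l * x) ≤ 1 / (1 - β) := by
  have hrpow : ∫ x in Ioc 0 1, x ^ (-β) = 1 / (1 - β) := by
    rw [← intervalIntegral.integral_of_le zero_le_one, integral_rpow (Or.inl (by linarith)),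
      zero_rpow (by linarith), one_rpow]
    ring_nf
  rw [← hrpow]
  refine setIntegral_mono_on ((integrableOn_Ioi_zero_rpow_mul_exp_neg_mul hβ hl).mono_set
    Ioc_subset_Ioi_self) ?_ measurableSet_Ioc fun x hx => ?_
  · exact (intervalIntegrable_iff_integrableOn_Ioc_of_le zero_le_one).1
      (intervalIntegral.intervalIntegrable_rpow' (by linarith))
  · exact mul_le_of_le_one_right (rpow_nonneg hx.1.le _)
      (exp_le_one_iff.2 (by nlinarith [hx.1]))

noncomputable def heavyTail (β x : ℝ) : ℝ := if x ≤ 1 then 0 else 1 + β / x ^ (β + 1)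

lemma heavyTail_mul_exp_eq_indicator (β l x : ℝ) :
    heavyTail β x * exp (-l * x)
      = (Ioi 1).indicator (fun x => exp (-l * x) + β * (x ^ (-β - 1) * exp (-l * x))) x := by
  by_cases hx : x ≤ 1
  · simp [heavyTail, hx]
  · have hx : 1 < x := not_le.1 hx
    rw [heavyTail, if_neg hx.not_ge, indicator_of_mem (mem_Ioi.2 hx),
      show -β - 1 = -(β + 1) by ring, rpow_neg (by linarith)]
    ring

lemma integrableOn_heavyTail_mul_exp (hβ : 0 ≤ β) (hl : 0 < l) :
    IntegrableOn (fun x => heavyTail β x * exp (-l * x)) (Ioi 0) := by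
  simp_rw [heavyTail_mul_exp_eq_indicator]
  refine Integrable.integrableOn ((integrable_indicator_iff measurableSet_Ioi).2 ?_)
  exact (exp_neg_integrableOn_Ioi 1 hl).add
    ((integrableOn_Ioi_one_rpow_mul_exp_neg_mul (s := -β - 1) (by linarith) hl).const_mul β)

lemma integral_heavyTail_mul_exp (hβ₀ : 0 ≤ β) (hβ₁ : β < 1) (hl : 0 < l) :
    ∫ x in Ioi 0, heavyTail β x * exp (-l * x)
      = exp (-l) / l + exp (-l) - Gamma (1 - β) * l ^ β
        + l * ∫ x in Ioc 0 1, x ^ (-β) * exp (-l * x) := by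
  simp_rw [heavyTail_mul_exp_eq_indicator]
  rw [setIntegral_indicator measurableSet_Ioi, inter_eq_right.2 (Ioi_subset_Ioi zero_le_one),
    integral_add (exp_neg_integrableOn_Ioi 1 hl)
      ((integrableOn_Ioi_one_rpow_mul_exp_neg_mul (s := -β - 1) (by linarith) hl).const_mul β),
    integral_const_mul, integral_Ioi_one_rpow_mul_exp_neg_mul_by_parts hβ₀ hl,
    integral_Ioi_one_rpow_mul_exp_neg_mul_eq_Gamma_sub hβ₁ hl, integral_exp_neg_mul_Ioi hl,
    mul_one]
  have : l * l ^ (β - 1) = l ^ β := by rw [rpow_sub_one hl.ne']; field_simp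
  linear_combination (-Gamma (1 - β)) * this

lemma abs_one_add_mul_exp_neg_sub_one_le (hl : 0 ≤ l) : |(1 + l) * exp (-l) - 1| ≤ l ^ 2 := by
  have hlow : 1 - l ≤ exp (-l) := by linarith [add_one_le_exp (-l)]
  have hup : (1 + l) * exp (-l) ≤ 1 := by
    calc (1 + l) * exp (-l) ≤ exp l * exp (-l) := by
          gcongr; linarith [add_one_le_exp l]
      _ = 1 := by rw [← exp_add, add_neg_cancel, exp_zero]
  rw [abs_le]
  constructor <;> nlinarith

lemma abs_integral_heavyTail_mul_exp_sub_le (hβ₀ : 0 ≤ β) (hβ₁ : β < 1) (hl : 0 < l) :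
    |(∫ x in Ioi 0, heavyTail β x * exp (-l * x)) - (1 / l - Gamma (1 - β) * l ^ β)|
      ≤ (1 + 1 / (1 - β)) * l := by
  rw [integral_heavyTail_mul_exp hβ₀ hβ₁ hl]
  have hE₀ : 0 ≤ ∫ x in Ioc 0 1, x ^ (-β) * exp (-l * x) :=
    setIntegral_nonneg measurableSet_Ioc fun x hx => by have := hx.1; positivity
  have hE₁ := integral_Ioc_zero_one_rpow_mul_exp_neg_mul_le hβ₁ hl
  generalize (∫ x in Ioc 0 1, x ^ (-β) * exp (-l * x)) = E at hE₀ hE₁ ⊢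
  calc |exp (-l) / l + exp (-l) - Gamma (1 - β) * l ^ β + l * E
        - (1 / l - Gamma (1 - β) * l ^ β)|
      = |((1 + l) * exp (-l) - 1) / l + l * E| := by congr 1; field_simp; ring
    _ ≤ |(1 + l) * exp (-l) - 1| / l + l * E := (abs_add_le _ _).trans_eq
        (by rw [abs_div, abs_of_pos hl, abs_of_nonneg (mul_nonneg hl.le hE₀)])
    _ ≤ l ^ 2 / l + l * (1 / (1 - β)) := by
        gcongr
        exact abs_one_add_mul_exp_neg_sub_one_le hl.le
    _ = (1 + 1 / (1 - β)) * l := by field_simp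

lemma tendsto_inv_mul_integral_one_sub_heavyTail_mul_exp (hβ₀ : 0 ≤ β) (hβ₁ : β < 1) :
    Tendsto (fun l => 1 / l * ∫ x in Ioi 0, (1 - heavyTail β x) * exp (-l * x))
      (𝓝[>] 0) atTop := by
  set C := 1 + 1 / (1 - β)
  have hlower : ∀ l > 0, Gamma (1 - β) * l ^ (β - 1) - C
      ≤ 1 / l * ∫ x in Ioi 0, (1 - heavyTail β x) * exp (-l * x) := by
    intro l hl
    have hsplit : ∫ x in Ioi 0, (1 - heavyTail β x) * exp (-l * x)
        = 1 / l - ∫ x in Ioi 0, heavyTail β x * exp (-l * x) := by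
      simp_rw [sub_mul, one_mul]
      rw [integral_sub (exp_neg_integrableOn_Ioi 0 hl) (integrableOn_heavyTail_mul_exp hβ₀ hl),
        integral_exp_neg_mul_Ioi hl, mul_zero, exp_zero]
    have hbound := (abs_le.1 (abs_integral_heavyTail_mul_exp_sub_le hβ₀ hβ₁ hl)).2
    rw [hsplit, rpow_sub_one hl.ne']
    calc Gamma (1 - β) * (l ^ β / l) - C = 1 / l * (Gamma (1 - β) * l ^ β - C * l) := by
          field_simp
      _ ≤ _ := mul_le_mul_of_nonneg_left (by linarith) (by positivity)
  refine tendsto_atTop_mono' _ (eventually_nhdsWithin_of_forall hlower) ?_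
  exact tendsto_atTop_add_const_right _ _
    ((tendsto_rpow_neg_nhdsGT_zero (by linarith)).const_mul_atTop (Gamma_pos_of_pos (by linarith)))

/-- Small-lambda asymptotics of the Laplace transform for the heavy-tailed density
g(x) = 0 on [0,1], g(x) = 1 + beta x^{-beta-1} for x > 1 (0 < beta < 1):
int_0^inf g(x) e^{-l x} dx = 1/l - Gamma(1-beta) l^beta + O(l) as l -> 0, and
limsup_{l -> 0+} (1/l) int_0^inf (1-g(x)) e^{-l x} dx = +infinity. -/
theorem heavy_tail_laplace_asymptotics (β : ℝ) (hβ0 : 0 < β) (hβ1 : β < 1)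
    (g : ℝ → ℝ) (hg : ∀ x : ℝ, g x = if x ≤ 1 then 0 else 1 + β / x ^ (β + 1)) :
    (∃ C : ℝ, 0 < C ∧ ∃ δ : ℝ, 0 < δ ∧ ∀ l : ℝ, 0 < l → l < δ →
      |(∫ x in Set.Ioi (0:ℝ), g x * Real.exp (-l * x)) -
          (1 / l - Real.Gamma (1 - β) * l ^ β)| ≤ C * l) ∧
    (∀ M : ℝ, ∃ᶠ l in nhdsWithin (0:ℝ) (Set.Ioi 0),
      M < (1 / l) * ∫ x in Set.Ioi (0:ℝ), (1 - g x) * Real.exp (-l * x)) := by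
  obtain rfl : g = heavyTail β := funext hg
  have hC : 0 < 1 + 1 / (1 - β) := add_pos one_pos (one_div_pos.2 (sub_pos.2 hβ1))
  have hlim := tendsto_inv_mul_integral_one_sub_heavyTail_mul_exp hβ0.le hβ1
  exact ⟨⟨_, hC, 1, one_pos, fun l hl _ => abs_integral_heavyTail_mul_exp_sub_le hβ0.le hβ1 hl⟩,
    fun M => (hlim.eventually_gt_atTop M).frequently⟩
end
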